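/- Let k be a non-negative integer and let P be a finite propositional logic program such that every atom occurring negated in P is the head of some rule of P (Neg(P) ⊆ h(P)). Let P^k be the program consisting of all rules r of P with |b⁻(r)| ≤ k, and let M ⊆ At(P) be a set of atoms with |M| ≥ |P| − k. Then M is a stable model of P if and only if M is a stable model of P^k. -/

import Mathlib

open scoped Classical

noncomputable section

/-- A propositional logic program rule: a head atom, a finite positive body and a
finite negative body. -/
structure LPRule (α : Type) where
  head : α
  pos : Finset α
  neg : Finset α
deriving DecidableEq

/-- A logic program is a finite set of rules. -/
abbrev LProgram (α : Type) := Finset (LPRule α)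

variable {α : Type} [DecidableEq α]

/-- `horn r`: the Horn rule with the same head and positive body as `r`
and empty negative body. -/
def LPRule.horn (r : LPRule α) : LPRule α := ⟨r.head, r.pos, ∅⟩

/-- A rule `r` is proper if `h(r) ∉ b⁺(r)` and `b⁺(r) ∩ b⁻(r) = ∅`. -/
def LPRule.proper (r : LPRule α) : Prop := r.head ∉ r.pos ∧ r.pos ∩ r.neg = ∅

/-- `At(P)`: the set of atoms occurring in `P`. -/
def atomsP (P : LProgram α) : Finset α := P.sup (fun r => insert r.head (r.pos ∪ r.neg))

/-- `h(P)`: the set of heads of rules of `P`. -/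
def headsP (P : LProgram α) : Finset α := P.image LPRule.head

/-- `Neg(P)`: the set of atoms occurring negated in `P`. -/
def negP (P : LProgram α) : Finset α := P.sup LPRule.neg

/-- The least model of a (Horn) program `Q`, given as a set of rules (negative bodies
are ignored; Horn rules have empty negative bodies): the least set `M` of atoms such
that `h(r) ∈ M` whenever `r ∈ Q` and `b⁺(r) ⊆ M`. -/
def LM (Q : Set (LPRule α)) : Set α :=
  ⋂₀ {M : Set α | ∀ r ∈ Q, (↑r.pos : Set α) ⊆ M → r.head ∈ M}

/-- The reduct `P^S`: delete every rule whose negative body meets `S` and remove the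
negative bodies of the remaining rules. -/
def reduct (P : LProgram α) (S : Set α) : Set (LPRule α) :=
  LPRule.horn '' {r | r ∈ P ∧ (↑r.neg : Set α) ∩ S = ∅}

/-- `M` is a stable model of `P` if `M = LM (P^M)`. -/
def isStable (P : LProgram α) (M : Set α) : Prop :=
  M = LM (reduct P M)

omit [DecidableEq α] in
lemma LM_subset_image_head (Q : Set (LPRule α)) : LM Q ⊆ LPRule.head '' Q :=
  fun _ ha => ha _ fun r hr _ => ⟨r, hr, rfl⟩

lemma image_head_reduct_subset (P : LProgram α) (S : Set α) :
    LPRule.head '' reduct P S ⊆ headsP P := by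
  rintro _ ⟨_, ⟨r, ⟨hr, -⟩, rfl⟩, rfl⟩
  exact Finset.mem_image.2 ⟨r, hr, rfl⟩

lemma headsP_filter_subset (P : LProgram α) (p : LPRule α → Prop) [DecidablePred p] :
    headsP (P.filter p) ⊆ headsP P :=
  Finset.image_subset_image (Finset.filter_subset p P)

lemma subset_headsP_of_isStable {P : LProgram α} {M : Finset α} (h : isStable P ↑M) :
    M ⊆ headsP P := by
  intro a ha
  have ha' : a ∈ LM (reduct P ↑M) := h ▸ ha
  exact_mod_cast image_head_reduct_subset P _ (LM_subset_image_head _ ha')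

lemma card_sdiff_add_card_le_card {P : LProgram α} {M : Finset α} (hM : M ⊆ headsP P) :
    (headsP P \ M).card + M.card ≤ P.card := by
  rw [Finset.card_sdiff_add_card_eq_card hM]
  exact Finset.card_image_le

lemma neg_subset_headsP_sdiff {P : LProgram α} (hneg : negP P ⊆ headsP P) {r : LPRule α}
    (hr : r ∈ P) {M : Finset α} (hdisj : Disjoint r.neg M) : r.neg ⊆ headsP P \ M :=
  Finset.subset_sdiff.2 ⟨fun _ ha => hneg (Finset.mem_sup.2 ⟨r, hr, ha⟩), hdisj⟩

omit [DecidableEq α] in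
lemma reduct_filter_eq {P : LProgram α} {S : Set α} {p : LPRule α → Prop} [DecidablePred p]
    (hp : ∀ r ∈ P, (↑r.neg : Set α) ∩ S = ∅ → p r) : reduct (P.filter p) S = reduct P S := by
  unfold reduct
  congr 1
  ext r
  simp only [Finset.mem_filter]
  exact ⟨fun ⟨⟨hr, _⟩, hd⟩ => ⟨hr, hd⟩, fun ⟨hr, hd⟩ => ⟨⟨hr, hp r hr hd⟩, hd⟩⟩

/-- Every rule surviving in `P^M` has its negative body among the heads of `P` outside `M`,
and there are at most `|P| - |M| ≤ k` of those. -/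
lemma reduct_filter_card_neg_le_eq {k : ℕ} {P : LProgram α} (hneg : negP P ⊆ headsP P)
    {M : Finset α} (hM : M ⊆ headsP P) (hcard : P.card ≤ M.card + k) :
    reduct (P.filter fun r => r.neg.card ≤ k) ↑M = reduct P ↑M := by
  refine reduct_filter_eq fun r hr hdisj => ?_
  have hdisj' : Disjoint r.neg M := by
    rwa [← Finset.disjoint_coe, Set.disjoint_iff_inter_eq_empty]
  calc r.neg.card ≤ (headsP P \ M).card :=
        Finset.card_le_card (neg_subset_headsP_sdiff hneg hr hdisj')
    _ ≤ k := by have := card_sdiff_add_card_le_card hM; omega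

theorem stable_iff_stable_boundedNeg_general (k : ℕ) (P : LProgram α)
    (hneg : negP P ⊆ headsP P)
    (M : Finset α) (hcard : P.card ≤ M.card + k) :
    isStable P ↑M ↔ isStable (P.filter (fun r => r.neg.card ≤ k)) ↑M := by
  have hred (hM : M ⊆ headsP P) := reduct_filter_card_neg_le_eq hneg hM hcard
  constructor
  · intro h
    unfold isStable
    rwa [hred (subset_headsP_of_isStable h)]
  · intro h
    have hM := (subset_headsP_of_isStable h).trans (headsP_filter_subset P _)
    unfold isStable at h ⊢
    rwa [hred hM] at h

/-- if every atom occurring negated in `P` is the head of some rule of `P`,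
`P^k` consists of the rules of `P` with at most `k` negated atoms in the body, and
`M ⊆ At(P)` satisfies `|M| ≥ |P| - k`, then `M` is a stable model of `P` iff `M` is a
stable model of `P^k`. -/
theorem stable_iff_stable_boundedNeg (k : ℕ) (P : LProgram α)
    (hneg : negP P ⊆ headsP P)
    (M : Finset α) (hM : M ⊆ atomsP P) (hcard : P.card ≤ M.card + k) :
    isStable P ↑M ↔ isStable (P.filter (fun r => r.neg.card ≤ k)) ↑M :=
  stable_iff_stable_boundedNeg_general k P hneg M hcard
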